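/- Let 0 < α < 1 and f ∈ L¹(0,1). If the Abel integral equation (I^α φ)(x) = f(x) has a solution φ ∈ L¹(0,1), then I^(1-α) f is absolutely continuous on [0,1] and (I^(1-α) f)(0) = 0; conversely, under these conditions, the unique solution in L¹(0,1) is φ(x) = d/dx (I^(1-α) f)(x). -/

import Mathlib

open MeasureTheory Real Set Filter

open Classical in
/-- Riemann-Liouville fractional integral of order `α` (identity for `α = 0`). -/
noncomputable def RL (α : ℝ) (f : ℝ → ℝ) : ℝ → ℝ :=
  if α = 0 then f
  else fun x => (1 / Real.Gamma α) * ∫ t in (0:ℝ)..x, (x - t) ^ (α - 1) * f t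

/-- `f ∈ L¹(0,1)`. -/
def L1 (f : ℝ → ℝ) : Prop := MeasureTheory.IntegrableOn f (Set.Ioc 0 1)

/-- `g` is absolutely continuous on `[0,1]` with value `c` at `0`:
`g x = c + ∫₀ˣ ψ` for some `ψ ∈ L¹(0,1)`. -/
def ACval (g : ℝ → ℝ) (c : ℝ) : Prop :=
  ∃ ψ : ℝ → ℝ, MeasureTheory.IntegrableOn ψ (Set.Ioc 0 1) ∧
    ∀ x ∈ Set.Ioc (0:ℝ) 1, g x = c + ∫ t in (0:ℝ)..x, ψ t

/-- `g ∈ AC([0,1])`. -/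
def IsAC (g : ℝ → ℝ) : Prop := ∃ c : ℝ, ACval g c

/-!
Composing `I^(1-α)` after `I^α` gives the primitive: by Fubini on the triangle `0 < t < s < x`
and the Beta integral `∫ₜˣ (x - s)^(-α) (s - t)^(α-1) ds = Γ(α) Γ(1-α)`,
`I^(1-α) (I^α φ) x = ∫₀ˣ φ`. So a solution `φ` makes `I^(1-α) f` the primitive of `φ`, which
is absolutely continuous, vanishes at `0` and, by Lebesgue's differentiation theorem, has
derivative `φ` almost everywhere. Conversely, if `I^(1-α) f = ∫₀ˣ ψ`, then `I^(1-α) (I^α ψ)` and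
`I^(1-α) f` agree, and `I^(1-α)` is injective on `L¹`, since applying `I^α` turns it into the
primitive, which determines its integrand almost everywhere.
-/

lemma integral_rpow_mul_sub_rpow {a b c : ℝ} (ha : 0 < a) (hb : 0 < b) (hc : 0 < c) :
    ∫ u in (0:ℝ)..c, u ^ (a - 1) * (c - u) ^ (b - 1) =
      Gamma a * Gamma b / Gamma (a + b) * c ^ (a + b - 1) := by
  apply Complex.ofReal_injective
  rw [← intervalIntegral.integral_ofReal, mul_comm]
  push_cast
  rw [← Complex.Gamma_ofReal, ← Complex.Gamma_ofReal, ← Complex.Gamma_ofReal, Complex.ofReal_add,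
    ← Complex.betaIntegral_eq_Gamma_mul_div _ _ (by simpa) (by simpa), Complex.ofReal_cpow hc.le]
  push_cast
  rw [← Complex.betaIntegral_scaled _ _ hc]
  refine intervalIntegral.integral_congr fun u hu => ?_
  rw [uIcc_of_le hc.le] at hu
  rw [Complex.ofReal_cpow hu.1, Complex.ofReal_cpow (sub_nonneg.2 hu.2)]
  push_cast
  ring_nf

lemma integral_sub_rpow_mul_sub_rpow {a b t x : ℝ} (ha : 0 < a) (hb : 0 < b) (htx : t < x) :
    ∫ s in t..x, (x - s) ^ (b - 1) * (s - t) ^ (a - 1) =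
      Gamma a * Gamma b / Gamma (a + b) * (x - t) ^ (a + b - 1) := by
  rw [← integral_rpow_mul_sub_rpow ha hb (sub_pos.2 htx), ← sub_self t,
    ← intervalIntegral.integral_comp_sub_right]
  refine intervalIntegral.integral_congr fun s _ => ?_
  simp only [sub_sub_sub_cancel_right]
  ring

-- A function that is not interval integrable has integral `0`, and this one's is positive.
lemma intervalIntegrable_sub_rpow_mul_sub_rpow {a b t x : ℝ} (ha : 0 < a) (hb : 0 < b)
    (htx : t ≤ x) :
    IntervalIntegrable (fun s => (x - s) ^ (b - 1) * (s - t) ^ (a - 1)) volume t x := by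
  rcases htx.eq_or_lt with rfl | htx'
  · exact .refl
  refine intervalIntegral.intervalIntegrable_of_integral_ne_zero ?_
  rw [integral_sub_rpow_mul_sub_rpow ha hb htx']
  exact (mul_pos (div_pos (mul_pos (Gamma_pos_of_pos ha) (Gamma_pos_of_pos hb))
    (Gamma_pos_of_pos (add_pos ha hb))) (rpow_pos_of_pos (sub_pos.2 htx') _)).ne'

section Triangle

variable {x C : ℝ} {K : ℝ → ℝ → ℝ} {g : ℝ → ℝ}

lemma integral_indicator_Ioi_restrict_Ioc {t : ℝ} (ht : 0 ≤ t) (h : ℝ → ℝ) :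
    ∫ s, (Ioi t).indicator h s ∂volume.restrict (Ioc 0 x) = ∫ s in Ioc t x, h s := by
  rw [integral_indicator measurableSet_Ioi, Measure.restrict_restrict measurableSet_Ioi,
    inter_comm, Ioc_inter_Ioi, sup_eq_right.2 ht]

lemma integral_indicator_Iio_restrict_Ioc {s : ℝ} (hs : s ≤ x) (h : ℝ → ℝ) :
    ∫ t, (Iio s).indicator h t ∂volume.restrict (Ioc 0 x) = ∫ t in Ioc 0 s, h t := by
  rw [integral_indicator measurableSet_Iio, Measure.restrict_restrict measurableSet_Iio,
    integral_Ioc_eq_integral_Ioo]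
  congr 2
  ext t
  simp only [mem_inter_iff, mem_Iio, mem_Ioc, mem_Ioo]
  constructor <;> intro <;> grind

lemma indicator_snd_lt_fst_eq_Ioi (G : ℝ × ℝ → ℝ) (s t : ℝ) :
    {p : ℝ × ℝ | p.2 < p.1}.indicator G (s, t) = (Ioi t).indicator (fun s => G (s, t)) s := by
  simp [indicator_apply]

lemma indicator_snd_lt_fst_eq_Iio (G : ℝ × ℝ → ℝ) (s t : ℝ) :
    {p : ℝ × ℝ | p.2 < p.1}.indicator G (s, t) = (Iio s).indicator (fun t => G (s, t)) t := by
  simp [indicator_apply]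

variable (hKm : Measurable (Function.uncurry K))
  (hK : ∀ t ∈ Ioc 0 x, IntegrableOn (K · t) (Ioc t x))
  (hC : ∀ t ∈ Ioc 0 x, ∫ s in Ioc t x, ‖K s t‖ ≤ C) (hg : IntegrableOn g (Ioc 0 x))
include hKm hK hC hg

lemma integrable_indicator_snd_lt_fst :
    Integrable ({p : ℝ × ℝ | p.2 < p.1}.indicator fun p => K p.1 p.2 * g p.2)
      ((volume.restrict (Ioc 0 x)).prod (volume.restrict (Ioc 0 x))) := by
  have hm : AEStronglyMeasurable ({p : ℝ × ℝ | p.2 < p.1}.indicator fun p => K p.1 p.2 * g p.2)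
      ((volume.restrict (Ioc 0 x)).prod (volume.restrict (Ioc 0 x))) :=
    (hKm.aestronglyMeasurable.mul hg.aestronglyMeasurable.comp_snd).indicator
      (measurableSet_lt measurable_snd measurable_fst)
  refine (integrable_prod_iff' hm).2 ⟨?_, ?_⟩
  · filter_upwards [ae_restrict_mem measurableSet_Ioc] with t ht
    simp_rw [indicator_snd_lt_fst_eq_Ioi]
    rw [integrable_indicator_iff measurableSet_Ioi, IntegrableOn,
      Measure.restrict_restrict measurableSet_Ioi, inter_comm, Ioc_inter_Ioi,
      sup_eq_right.2 ht.1.le]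
    exact (hK t ht).mul_const _
  · refine Integrable.mono' (hg.norm.const_mul C) hm.norm.prod_swap.integral_prod_right' ?_
    filter_upwards [ae_restrict_mem measurableSet_Ioc] with t ht
    simp_rw [indicator_snd_lt_fst_eq_Ioi, norm_indicator_eq_indicator_norm, norm_mul]
    rw [integral_indicator_Ioi_restrict_Ioc ht.1.le, integral_mul_const, Real.norm_of_nonneg
      (mul_nonneg (setIntegral_nonneg measurableSet_Ioc fun _ _ => norm_nonneg _) (norm_nonneg _))]
    exact mul_le_mul_of_nonneg_right (hC t ht) (norm_nonneg _)

lemma integrableOn_integral_Ioc_mul :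
    IntegrableOn (fun s => ∫ t in Ioc 0 s, K s t * g t) (Ioc 0 x) := by
  refine (integrable_indicator_snd_lt_fst hKm hK hC hg).integral_prod_left.congr ?_
  filter_upwards [ae_restrict_mem measurableSet_Ioc] with s hs
  simp_rw [indicator_snd_lt_fst_eq_Iio]
  exact integral_indicator_Iio_restrict_Ioc hs.2 _

lemma integral_Ioc_integral_Ioc_swap :
    ∫ s in Ioc 0 x, ∫ t in Ioc 0 s, K s t * g t =
      ∫ t in Ioc 0 x, (∫ s in Ioc t x, K s t) * g t := by
  have := integral_integral_swap (f := fun s t =>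
    {p : ℝ × ℝ | p.2 < p.1}.indicator (fun p => K p.1 p.2 * g p.2) (s, t))
    (integrable_indicator_snd_lt_fst hKm hK hC hg)
  rw [setIntegral_congr_fun measurableSet_Ioc fun s hs => ?_, this,
    setIntegral_congr_fun measurableSet_Ioc fun t ht => ?_]
  · simp_rw [indicator_snd_lt_fst_eq_Ioi]
    rw [integral_indicator_Ioi_restrict_Ioc ht.1.le, integral_mul_const]
  · simp_rw [indicator_snd_lt_fst_eq_Iio]
    exact (integral_indicator_Iio_restrict_Ioc hs.2 _).symm

end Triangle

lemma integral_sub_rpow {a t x : ℝ} (ha : 0 < a) :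
    ∫ s in t..x, (s - t) ^ (a - 1) = (x - t) ^ a / a := by
  rw [intervalIntegral.integral_comp_sub_right (fun s => s ^ (a - 1)),
    integral_rpow (Or.inl (by linarith)), sub_self, sub_add_cancel, zero_rpow ha.ne', sub_zero]

lemma RL_apply_of_nonneg {α x : ℝ} (hα : α ≠ 0) (f : ℝ → ℝ) (hx : 0 ≤ x) :
    RL α f x = (Gamma α)⁻¹ * ∫ t in Ioc 0 x, (x - t) ^ (α - 1) * f t := by
  rw [RL, if_neg hα, one_div, intervalIntegral.integral_of_le hx]

lemma RL_congr_ae {α x : ℝ} (hα : α ≠ 0) (hx : 0 ≤ x) {f g : ℝ → ℝ}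
    (hfg : f =ᵐ[volume.restrict (Ioc 0 x)] g) : RL α f x = RL α g x := by
  rw [RL_apply_of_nonneg hα f hx, RL_apply_of_nonneg hα g hx]
  congr 1
  refine integral_congr_ae ?_
  filter_upwards [hfg] with t ht
  rw [ht]

lemma integrableOn_RL {α b : ℝ} (hα : 0 < α) {φ : ℝ → ℝ} (hφ : IntegrableOn φ (Ioc 0 b)) :
    IntegrableOn (RL α φ) (Ioc 0 b) := by
  have hker : ∀ t ∈ Ioc 0 b, IntegrableOn (fun s => (s - t) ^ (α - 1)) (Ioc t b) := by
    intro t ht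
    have := (intervalIntegral.intervalIntegrable_rpow' (a := t - t) (b := b - t)
      (show (-1:ℝ) < α - 1 by linarith)).comp_sub_right t
    rw [sub_add_cancel, sub_add_cancel, intervalIntegrable_iff_integrableOn_Ioc_of_le ht.2] at this
    exact this
  have hbound : ∀ t ∈ Ioc 0 b, ∫ s in Ioc t b, ‖(s - t) ^ (α - 1)‖ ≤ b ^ α / α := by
    intro t ht
    rw [setIntegral_congr_fun measurableSet_Ioc fun s hs =>
        Real.norm_of_nonneg (rpow_nonneg (sub_nonneg.2 hs.1.le) _),
      ← intervalIntegral.integral_of_le ht.2, integral_sub_rpow hα]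
    gcongr
    · linarith [ht.2]
    · linarith [ht.1]
  refine IntegrableOn.congr_fun
    ((integrableOn_integral_Ioc_mul (by fun_prop) hker hbound hφ).const_mul (Gamma α)⁻¹)
    (fun x hx => ?_) measurableSet_Ioc
  rw [RL_apply_of_nonneg hα.ne' φ hx.1.le]

lemma RL_one_sub_RL_apply {α x : ℝ} (hα0 : 0 < α) (hα1 : α < 1) {φ : ℝ → ℝ}
    (hφ : IntegrableOn φ (Ioc 0 x)) (hx : 0 ≤ x) :
    RL (1 - α) (RL α φ) x = ∫ t in 0..x, φ t := by
  set K : ℝ → ℝ → ℝ := fun s t => (x - s) ^ (1 - α - 1) * (s - t) ^ (α - 1) with hK_def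
  have hβ : 0 < 1 - α := by linarith
  have hbeta : ∀ t < x, ∫ s in Ioc t x, K s t = Gamma α * Gamma (1 - α) := by
    intro t ht
    rw [← intervalIntegral.integral_of_le ht.le, integral_sub_rpow_mul_sub_rpow hα0 hβ ht]
    simp
  have hK : ∀ t ∈ Ioc 0 x, IntegrableOn (K · t) (Ioc t x) := fun t ht =>
    (intervalIntegrable_iff_integrableOn_Ioc_of_le ht.2).1
      (intervalIntegrable_sub_rpow_mul_sub_rpow hα0 hβ ht.2)
  have hC : ∀ t ∈ Ioc 0 x, ∫ s in Ioc t x, ‖K s t‖ ≤ Gamma α * Gamma (1 - α) := by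
    intro t ht
    have := Gamma_pos_of_pos hα0
    have := Gamma_pos_of_pos hβ
    rcases ht.2.eq_or_lt with rfl | htx
    · simp only [Ioc_self, Measure.restrict_empty, integral_zero_measure]
      positivity
    rw [setIntegral_congr_fun measurableSet_Ioc fun s hs => Real.norm_of_nonneg
      (mul_nonneg (rpow_nonneg (sub_nonneg.2 hs.2) _) (rpow_nonneg (sub_nonneg.2 hs.1.le) _)),
      hbeta t htx]
  calc RL (1 - α) (RL α φ) x
      = (Gamma (1 - α))⁻¹ * ∫ s in Ioc 0 x, (Gamma α)⁻¹ * ∫ t in Ioc 0 s, K s t * φ t := by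
        rw [RL_apply_of_nonneg hβ.ne' _ hx]
        congr 1
        refine setIntegral_congr_fun measurableSet_Ioc fun s (hs : s ∈ Ioc 0 x) => ?_
        simp only [RL_apply_of_nonneg hα0.ne' _ hs.1.le, hK_def, mul_assoc, integral_const_mul]
        ring
    _ = (Gamma (1 - α))⁻¹ * (Gamma α)⁻¹ * ∫ t in Ioc 0 x, (Gamma α * Gamma (1 - α)) * φ t := by
        rw [integral_const_mul, ← mul_assoc, integral_Ioc_integral_Ioc_swap (by fun_prop) hK hC hφ,
          integral_Ioc_eq_integral_Ioo, integral_Ioc_eq_integral_Ioo]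
        congr 1
        refine setIntegral_congr_fun measurableSet_Ioo fun t ht => ?_
        rw [hbeta t ht.2]
    _ = ∫ t in 0..x, φ t := by
        rw [integral_const_mul, intervalIntegral.integral_of_le hx]
        field_simp [(Gamma_pos_of_pos hα0).ne', (Gamma_pos_of_pos hβ).ne']

lemma ae_deriv_eq_of_eqOn_integral {F φ : ℝ → ℝ} {a b : ℝ}
    (hφ : IntegrableOn φ (Ioc a b)) (hF : ∀ x ∈ Ioc a b, F x = ∫ t in a..x, φ t) :
    ∀ᵐ x ∂volume.restrict (Ioc a b), deriv F x = φ x := by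
  rcases le_or_gt b a with hba | hab
  · simp [Ioc_eq_empty_of_le hba]
  have hb : ∀ᵐ x : ℝ, x ≠ b := by simp [ae_iff, measure_singleton]
  filter_upwards [ae_restrict_of_ae
      ((intervalIntegrable_iff_integrableOn_Ioc_of_le hab.le).2 hφ).ae_hasDerivAt_integral,
    ae_restrict_of_ae hb, ae_restrict_mem measurableSet_Ioc] with x hderiv hxb hx
  have hFx : F =ᶠ[nhds x] fun y => ∫ t in a..y, φ t :=
    eventually_of_mem (Ioo_mem_nhds hx.1 (hx.2.lt_of_ne hxb)) fun y hy => hF y ⟨hy.1, hy.2.le⟩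
  rw [hFx.deriv_eq]
  exact (hderiv (Icc_subset_uIcc (Ioc_subset_Icc_self hx)) a left_mem_uIcc).deriv

lemma ae_eq_of_eqOn_RL {α b : ℝ} (hα0 : 0 < α) (hα1 : α < 1) {g h : ℝ → ℝ}
    (hg : IntegrableOn g (Ioc 0 b)) (hh : IntegrableOn h (Ioc 0 b))
    (hgh : EqOn (RL α g) (RL α h) (Ioc 0 b)) :
    g =ᵐ[volume.restrict (Ioc 0 b)] h := by
  have hprimitive : ∀ x ∈ Ioc 0 b, ∫ t in 0..x, g t = ∫ t in 0..x, h t := by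
    intro x hx
    have hsub : Ioc 0 x ⊆ Ioc 0 _ := Ioc_subset_Ioc_right hx.2
    rw [← RL_one_sub_RL_apply hα0 hα1 (hg.mono_set hsub) hx.1.le,
      ← RL_one_sub_RL_apply hα0 hα1 (hh.mono_set hsub) hx.1.le]
    exact RL_congr_ae (by linarith) hx.1.le
      ((ae_restrict_mem measurableSet_Ioc).mono fun t ht => hgh (hsub ht))
  filter_upwards [ae_deriv_eq_of_eqOn_integral hg fun _ _ => rfl,
    ae_deriv_eq_of_eqOn_integral hh hprimitive] with x hg' hh'
  rw [← hg', hh']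

/-- Solvability of the Abel integral equation `I^α φ = f` in `L¹(0,1)`:
it is solvable iff `I^(1-α) f ∈ AC([0,1])` with `(I^(1-α) f)(0) = 0`, and in that
case the solution is unique and given by `φ = d/dx (I^(1-α) f)` a.e. -/
theorem abel_equation_solvability (α : ℝ) (hα0 : 0 < α) (hα1 : α < 1)
    (f : ℝ → ℝ) (hf : L1 f) :
    ((∃ φ : ℝ → ℝ, L1 φ ∧
        ∀ᵐ x ∂(volume.restrict (Set.Ioc (0:ℝ) 1)), RL α φ x = f x)
      ↔ ACval (RL (1 - α) f) 0)
    ∧ ∀ φ : ℝ → ℝ, L1 φ →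
        (∀ᵐ x ∂(volume.restrict (Set.Ioc (0:ℝ) 1)), RL α φ x = f x) →
        ∀ᵐ x ∂(volume.restrict (Set.Ioc (0:ℝ) 1)), φ x = deriv (RL (1 - α) f) x := by
  have hβ0 : 0 < 1 - α := by linarith
  have hprimitive : ∀ φ, L1 φ → (∀ᵐ x ∂(volume.restrict (Ioc (0:ℝ) 1)), RL α φ x = f x) →
      ∀ x ∈ Ioc (0:ℝ) 1, RL (1 - α) f x = ∫ t in 0..x, φ t := by
    intro φ hφ hsol x hx
    have hsub : Ioc 0 x ⊆ Ioc 0 _ := Ioc_subset_Ioc_right hx.2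
    rw [← RL_congr_ae hβ0.ne' hx.1.le (ae_restrict_of_ae_restrict_of_subset hsub hsol),
      RL_one_sub_RL_apply hα0 hα1 (hφ.mono_set hsub) hx.1.le]
  refine ⟨⟨fun ⟨φ, hφ, hsol⟩ => ⟨φ, hφ, fun x hx => ?_⟩, fun ⟨ψ, hψ, hAC⟩ => ⟨ψ, hψ, ?_⟩⟩,
    fun φ hφ hsol => ?_⟩
  · rw [zero_add, hprimitive φ hφ hsol x hx]
  · refine ae_eq_of_eqOn_RL hβ0 (by linarith) (integrableOn_RL hα0 hψ) hf fun x hx => ?_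
    rw [RL_one_sub_RL_apply hα0 hα1 (hψ.mono_set (Ioc_subset_Ioc_right hx.2)) hx.1.le,
      hAC x hx, zero_add]
  · filter_upwards [ae_deriv_eq_of_eqOn_integral hφ (hprimitive φ hφ hsol)] with x hx
    exact hx.symm
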